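/- Let -∞ ≤ a < b ≤ ∞, let 0 < p, q < ∞, let u, v, w be weights on (a,b), and let C > 0. Then the inequality (∫_a^b (∫_a^x f(s) u(s) ds)^q w(x) dx)^{1/q} ≤ C (∫_a^b f(x)^p v(x) dx)^{1/p} holds for all non-decreasing f ∈ 𝔐↑(a,b) if and only if the inequality (∫_a^b (∫_a^x (∫_a^t h(τ) dτ)^{1/p} u(t) dt)^q w(x) dx)^{p/q} ≤ C^p ∫_a^b h(x) (∫_x^b v) dx holds for all h ∈ 𝔐⁺(a,b). -/

import Mathlib

open MeasureTheory Set ENNReal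

noncomputable section

/-- The open interval `(a, b)` with extended-real endpoints, viewed as a set of reals. -/
def io (a b : EReal) : Set ℝ := {x : ℝ | a < (x : EReal) ∧ (x : EReal) < b}

/-- A weight on `(a, b)`: a measurable function which is positive and finite on `(a, b)`. -/
def IsWeight (a b : EReal) (u : ℝ → ℝ≥0∞) : Prop :=
  Measurable u ∧ ∀ x ∈ io a b, 0 < u x ∧ u x < ⊤

/-- The left-hand side of the Hardy inequality for non-decreasing functions. -/
def lhsMon (a b : EReal) (q : ℝ) (u w f : ℝ → ℝ≥0∞) : ℝ≥0∞ :=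
  (∫⁻ x in io a b, (∫⁻ s in io a x, f s * u s) ^ q * w x) ^ (1 / q)

/-- The right-hand side (without the constant) of the inequality. -/
def rhsNorm (a b : EReal) (p : ℝ) (v f : ℝ → ℝ≥0∞) : ℝ≥0∞ :=
  (∫⁻ x in io a b, f x ^ p * v x) ^ (1 / p)

/-!
Testing the monotone inequality on `f = (∫_a^x h)^(1/p)` gives the second inequality, because by
Fubini `∫_a^b f^p v = ∫_a^b h(x) ∫_x^b v`.

Conversely, for non-decreasing `f` put `g = f^p`. Truncate `g` at height `n`, cut it off to the
left of points `r_n ≥ a` tending to `a`, and let `h_n` be the backward difference quotient of the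
result with step `δ_n → 0`. Then `∫_a^x h_n` is the mean of the truncated `g` over `[x - δ_n, x)`,
so it lies below `g(x)`, and its `liminf` is at least `g(x-)`, which is `g(x)` off a countable set.
The second inequality for `h_n`, Fubini, and Fatou's lemma in both integrals give the first one
for `f`.
-/

open Filter Topology

lemma measurableSet_io (a b : EReal) : MeasurableSet (io a b) :=
  measurableSet_Ioo.preimage measurable_coe_real_ereal

lemma io_coe_eq_Ioo (r c : ℝ) : io r c = Ioo r c := by
  ext; simp [io]

lemma io_coe_right_eq_inter_Iio {a b : EReal} {x : ℝ} (hx : (x : EReal) ≤ b) :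
    io a x = io a b ∩ Iio x := by
  ext τ
  simp only [io, mem_ofPred_eq, mem_inter_iff, mem_Iio, EReal.coe_lt_coe_iff]
  exact ⟨fun h => ⟨⟨h.1, (EReal.coe_lt_coe_iff.2 h.2).trans_le hx⟩, h.2⟩,
    fun h => ⟨h.1.1, h.2⟩⟩

lemma io_coe_left_eq_inter_Ioi {a b : EReal} {τ : ℝ} (hτ : a ≤ τ) :
    io τ b = io a b ∩ Ioi τ := by
  ext x
  simp only [io, mem_ofPred_eq, mem_inter_iff, mem_Ioi, EReal.coe_lt_coe_iff]
  exact ⟨fun h => ⟨⟨hτ.trans_lt (EReal.coe_lt_coe_iff.2 h.1), h.2⟩, h.1⟩,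
    fun h => ⟨h.2, h.1.2⟩⟩

lemma setLIntegral_io_eq_Iio {a : EReal} {x : ℝ} {F : ℝ → ℝ≥0∞}
    (hF : ∀ τ : ℝ, (τ : EReal) ≤ a → F τ = 0) :
    ∫⁻ τ in io a x, F τ = ∫⁻ τ in Iio x, F τ := by
  have hsupp : Function.support F ⊆ {τ : ℝ | a < τ} := fun τ hτ =>
    not_le.1 fun h => hτ (hF τ h)
  have hmeas : MeasurableSet {τ : ℝ | a < τ} :=
    measurableSet_Ioi.preimage measurable_coe_real_ereal
  rw [← setLIntegral_eq_of_support_subset (μ := volume.restrict (Iio x)) hsupp,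
    Measure.restrict_restrict hmeas]
  congr 2
  ext τ
  simp [io]

def primitive (a : EReal) (h : ℝ → ℝ≥0∞) (x : ℝ) : ℝ≥0∞ := ∫⁻ τ in io a x, h τ

lemma monotone_primitive (a : EReal) (h : ℝ → ℝ≥0∞) : Monotone (primitive a h) :=
  fun _ _ hxy => lintegral_mono_set fun _ hτ =>
    ⟨hτ.1, hτ.2.trans_le (EReal.coe_le_coe_iff.2 hxy)⟩

lemma measurable_primitive (a : EReal) (h : ℝ → ℝ≥0∞) : Measurable (primitive a h) :=
  (monotone_primitive a h).measurable

theorem lintegral_primitive_mul (a b : EReal) {h v : ℝ → ℝ≥0∞} (hh : Measurable h)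
    (hv : Measurable v) :
    ∫⁻ x in io a b, primitive a h x * v x = ∫⁻ τ in io a b, h τ * ∫⁻ x in io τ b, v x := by
  have hI := measurableSet_io a b
  have hleft : ∀ x τ : ℝ, (if τ < x then h τ * v x else 0) = (Iio x).indicator h τ * v x := by
    intro x τ
    by_cases hτx : τ < x <;> simp [indicator, hτx]
  have hright : ∀ x τ : ℝ, (if τ < x then h τ * v x else 0) = h τ * (Ioi τ).indicator v x := by
    intro x τ
    by_cases hτx : τ < x <;> simp [indicator, hτx]
  calc ∫⁻ x in io a b, primitive a h x * v x
      = ∫⁻ x in io a b, ∫⁻ τ in io a b, if τ < x then h τ * v x else 0 := by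
        refine setLIntegral_congr_fun hI fun x hx => ?_
        simp_rw [hleft]
        rw [lintegral_mul_const _ (hh.indicator measurableSet_Iio),
          lintegral_indicator measurableSet_Iio, Measure.restrict_restrict measurableSet_Iio,
          inter_comm, ← io_coe_right_eq_inter_Iio hx.2.le, primitive]
    _ = ∫⁻ τ in io a b, ∫⁻ x in io a b, if τ < x then h τ * v x else 0 :=
        lintegral_lintegral_swap (((hh.comp measurable_snd).mul (hv.comp measurable_fst)).ite
          (measurableSet_lt measurable_snd measurable_fst) measurable_const).aemeasurable
    _ = ∫⁻ τ in io a b, h τ * ∫⁻ x in io τ b, v x := by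
        refine setLIntegral_congr_fun hI fun τ hτ => ?_
        simp_rw [hright]
        rw [lintegral_const_mul _ (hv.indicator measurableSet_Ioi),
          lintegral_indicator measurableSet_Ioi, Measure.restrict_restrict measurableSet_Ioi,
          inter_comm, ← io_coe_left_eq_inter_Ioi hτ.1.le]

lemma ENNReal.liminf_mul_const_le {ι : Type*} {l : Filter ι} [l.NeBot] (f : ι → ℝ≥0∞)
    (c : ℝ≥0∞) : liminf f l * c ≤ liminf (fun i => f i * c) l :=
  calc liminf f l * c = liminf f l * liminf (fun _ => c) l := by rw [liminf_const]
    _ ≤ _ := ENNReal.le_liminf_mul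

lemma ENNReal.liminf_rpow {ι : Type*} {l : Filter ι} [l.NeBot] (f : ι → ℝ≥0∞) {q : ℝ}
    (hq : 0 ≤ q) :
    liminf f l ^ q = liminf (fun i => f i ^ q) l :=
  (ENNReal.monotone_rpow_of_nonneg hq).map_liminf_of_continuousAt f
    ENNReal.continuous_rpow_const.continuousAt

lemma ENNReal.rpow_div_le_rpow_iff {x y : ℝ≥0∞} {p q : ℝ} (hp : 0 < p) (hq : 0 < q) :
    x ^ (p / q) ≤ y ^ p ↔ x ≤ y ^ q := by
  rw [← ENNReal.rpow_le_rpow_iff (div_pos hp hq) (x := x), ← ENNReal.rpow_mul,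
    mul_div_cancel₀ p hq.ne']

def hardyFunctional (a b : EReal) (q : ℝ) (u w F : ℝ → ℝ≥0∞) : ℝ≥0∞ :=
  ∫⁻ x in io a b, primitive a (fun t => F t * u t) x ^ q * w x

lemma lhsMon_le_iff {a b : EReal} {q : ℝ} (hq : 0 < q) {u w f : ℝ → ℝ≥0∞} {c : ℝ≥0∞} :
    lhsMon a b q u w f ≤ c ↔ hardyFunctional a b q u w f ≤ c ^ q := by
  rw [lhsMon, one_div]
  exact ENNReal.rpow_inv_le_iff hq

lemma rhsNorm_rpow (a b : EReal) {p : ℝ} (hp : 0 < p) (v f : ℝ → ℝ≥0∞) :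
    rhsNorm a b p v f ^ p = ∫⁻ x in io a b, f x ^ p * v x := by
  rw [rhsNorm, one_div, ENNReal.rpow_inv_rpow hp.ne']

theorem hardyFunctional_le_liminf {a b : EReal} {q : ℝ} (hq : 0 < q) {u w f : ℝ → ℝ≥0∞}
    (hu : Measurable u) (hw : Measurable w) {F : ℕ → ℝ → ℝ≥0∞} (hF : ∀ n, Measurable (F n))
    (hfF : ∀ᵐ t ∂volume.restrict (io a b), f t ≤ liminf (fun n => F n t) atTop) :
    hardyFunctional a b q u w f ≤ liminf (fun n => hardyFunctional a b q u w (F n)) atTop := by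
  have hinner : ∀ x ∈ io a b, primitive a (fun t => f t * u t) x ≤
      liminf (fun n => primitive a (fun t => F n t * u t) x) atTop := by
    intro x hx
    have hfF' := ae_restrict_of_ae_restrict_of_subset
      (fun τ hτ => ⟨hτ.1, hτ.2.trans hx.2⟩ : io a x ⊆ io a b) hfF
    calc primitive a (fun t => f t * u t) x
        ≤ ∫⁻ t in io a x, liminf (fun n => F n t * u t) atTop :=
          lintegral_mono_ae <| hfF'.mono fun t ht =>
            (mul_le_mul_left ht _).trans (ENNReal.liminf_mul_const_le _ _)
      _ ≤ _ := lintegral_liminf_le fun n => (hF n).mul hu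
  calc hardyFunctional a b q u w f
      ≤ ∫⁻ x in io a b,
          liminf (fun n => primitive a (fun t => F n t * u t) x ^ q * w x) atTop := by
        refine setLIntegral_mono' (measurableSet_io a b) fun x hx => ?_
        calc primitive a (fun t => f t * u t) x ^ q * w x
            ≤ liminf (fun n => primitive a (fun t => F n t * u t) x) atTop ^ q * w x := by
              gcongr
              exact hinner x hx
          _ ≤ _ := by
              rw [ENNReal.liminf_rpow _ hq.le]
              exact ENNReal.liminf_mul_const_le _ _
    _ ≤ _ := lintegral_liminf_le fun n => ((measurable_primitive a _).pow_const q).mul hw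

theorem ae_le_of_forall_lt_le {β α : Type*} [LinearOrder β] [MeasurableSpace β] (μ : Measure β)
    [NullSingletonClass μ] [TopologicalSpace α] [LinearOrder α] [OrderTopology α]
    [SecondCountableTopology α] {s : Set β} {g L : β → α}
    (h : ∀ x ∈ s, ∀ y ∈ s, y < x → g y ≤ L x) : ∀ᵐ x ∂μ, x ∈ s → g x ≤ L x := by
  refine ae_iff.2 (measure_mono_null (fun x hx => ?_)
    ((countable_image_lt_image_Iio_within s g).measure_zero μ))
  simp only [mem_ofPred_eq, Classical.not_imp, not_le] at hx
  exact ⟨hx.1, L x, hx.2, fun y hy hyx => h x hx.1 y hy hyx⟩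

lemma EReal.exists_seq_ge_eventually_lt {a : EReal} (ha : a ≠ ⊤) :
    ∃ r : ℕ → ℝ, (∀ n, a ≤ r n) ∧ ∀ y : ℝ, a < y → ∀ᶠ n in atTop, r n < y := by
  induction a using EReal.rec with
  | bot =>
    exact ⟨fun n => -n, fun _ => bot_le, fun y _ =>
      (tendsto_neg_atTop_atBot.comp tendsto_natCast_atTop_atTop).eventually_lt_atBot y⟩
  | coe a =>
    exact ⟨fun _ => a, fun _ => le_rfl,
      fun y hy => .of_forall fun _ => EReal.coe_lt_coe_iff.1 hy⟩
  | top => exact absurd rfl ha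

def diffQuotient (φ : ℝ → ℝ≥0∞) (δ τ : ℝ) : ℝ≥0∞ :=
  (ENNReal.ofReal δ)⁻¹ * (φ τ - φ (τ - δ))

theorem setLIntegral_Iio_diffQuotient {φ : ℝ → ℝ≥0∞} {δ x : ℝ} (hφ : Measurable φ)
    (hδ : 0 ≤ δ) (hmono : MonotoneOn φ (Iio x)) (hfin : ∫⁻ τ in Iio (x - δ), φ τ ≠ ∞) :
    ∫⁻ τ in Iio x, diffQuotient φ δ τ = (ENNReal.ofReal δ)⁻¹ * ∫⁻ τ in Ico (x - δ) x, φ τ := by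
  have hφδ : Measurable fun τ => φ (τ - δ) := hφ.comp (measurable_sub_const δ)
  have hshift : ∫⁻ τ in Iio x, φ (τ - δ) = ∫⁻ τ in Iio (x - δ), φ τ := by
    rw [← (measurePreserving_sub_right volume δ).setLIntegral_comp_preimage
      measurableSet_Iio hφ, preimage_sub_const_Iio, sub_add_cancel]
  have hsplit :
      ∫⁻ τ in Iio x, φ τ = (∫⁻ τ in Iio (x - δ), φ τ) + ∫⁻ τ in Ico (x - δ) x, φ τ := by
    rw [← Iio_union_Ico_eq_Iio (sub_le_self x hδ)]
    exact lintegral_union measurableSet_Ico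
      ((Iio_disjoint_Ici (le_refl (x - δ))).mono_right Ico_subset_Ici_self)
  have hle : ∀ᵐ τ ∂volume.restrict (Iio x), φ (τ - δ) ≤ φ τ :=
    (ae_restrict_iff' measurableSet_Iio).2 <| Eventually.of_forall fun τ hτ =>
      hmono ((sub_le_self τ hδ).trans_lt hτ) hτ (sub_le_self τ hδ)
  simp only [diffQuotient]
  rw [lintegral_const_mul _ (f := fun τ => φ τ - φ (τ - δ)) (hφ.sub hφδ),
    lintegral_sub hφδ (hshift ▸ hfin) hle, hshift, hsplit, ENNReal.add_sub_cancel_left hfin]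

lemma measurable_diffQuotient {φ : ℝ → ℝ≥0∞} (hφ : Measurable φ) (δ : ℝ) :
    Measurable (diffQuotient φ δ) :=
  (hφ.sub (hφ.comp (measurable_sub_const δ))).const_mul _

lemma inv_mul_setLIntegral_Ico_const {δ : ℝ} (hδ : 0 < δ) (x : ℝ) (c : ℝ≥0∞) :
    (ENNReal.ofReal δ)⁻¹ * ∫⁻ _ in Ico (x - δ) x, c = c := by
  rw [setLIntegral_const, Real.volume_Ico, _root_.sub_sub_cancel, mul_left_comm,
    ENNReal.inv_mul_cancel (ofReal_pos.2 hδ).ne' ofReal_ne_top, mul_one]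

section Cutoff

variable {a b : EReal} {g : ℝ → ℝ≥0∞} {r : ℝ} {K : ℝ≥0∞}

def cutoff (b : EReal) (g : ℝ → ℝ≥0∞) (r : ℝ) (K : ℝ≥0∞) : ℝ → ℝ≥0∞ :=
  (io r b).indicator fun τ => min (g τ) K

lemma measurable_cutoff (hg : Measurable g) : Measurable (cutoff b g r K) :=
  (hg.min measurable_const).indicator (measurableSet_io _ _)

lemma cutoff_le_const (τ : ℝ) : cutoff b g r K τ ≤ K := by
  by_cases hτ : τ ∈ io r b <;> simp [cutoff, hτ]

lemma cutoff_of_le {τ : ℝ} (hτ : τ ≤ r) : cutoff b g r K τ = 0 :=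
  indicator_of_notMem (fun h => (EReal.coe_lt_coe_iff.1 h.1).not_ge hτ) _

lemma cutoff_le_of_le (har : a ≤ r) (hg : MonotoneOn g (io a b)) {x τ : ℝ} (hx : x ∈ io a b)
    (hτx : τ ≤ x) : cutoff b g r K τ ≤ g x := by
  by_cases hτ : τ ∈ io r b
  · rw [cutoff, indicator_of_mem hτ]
    exact (min_le_left _ _).trans (hg ⟨har.trans_lt hτ.1, hτ.2⟩ hx hτx)
  · simp [cutoff, hτ]

lemma min_le_cutoff (har : a ≤ r) (hg : MonotoneOn g (io a b)) {y τ : ℝ} (hy : y ∈ io r b)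
    (hyτ : y ≤ τ) (hτ : (τ : EReal) < b) : min (g y) K ≤ cutoff b g r K τ := by
  have hyτ' : (y : EReal) ≤ τ := EReal.coe_le_coe_iff.2 hyτ
  rw [cutoff, indicator_of_mem (show τ ∈ io r b from ⟨hy.1.trans_le hyτ', hτ⟩)]
  exact min_le_min_right K
    (hg ⟨har.trans_lt hy.1, hy.2⟩ ⟨(har.trans_lt hy.1).trans_le hyτ', hτ⟩ hyτ)

lemma monotoneOn_cutoff (har : a ≤ r) (hg : MonotoneOn g (io a b)) {x : ℝ}
    (hx : (x : EReal) ≤ b) : MonotoneOn (cutoff b g r K) (Iio x) := by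
  intro τ₁ _ τ₂ hτ₂ h12
  by_cases hτ₁ : τ₁ ∈ io r b
  · rw [cutoff, indicator_of_mem hτ₁]
    exact min_le_cutoff har hg hτ₁ h12 ((EReal.coe_lt_coe_iff.2 hτ₂).trans_le hx)
  · simp [cutoff, hτ₁]

lemma setLIntegral_Iio_cutoff_ne_top (hK : K ≠ ∞) (c : ℝ) :
    ∫⁻ τ in Iio c, cutoff b g r K τ ≠ ∞ := by
  rw [← setLIntegral_io_eq_Iio (a := r) fun τ hτ => cutoff_of_le (EReal.coe_le_coe_iff.1 hτ)]
  refine ne_top_of_le_ne_top ?_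
    (setLIntegral_mono' (measurableSet_io _ _) fun τ _ => cutoff_le_const τ)
  rw [setLIntegral_const, io_coe_eq_Ioo, Real.volume_Ioo]
  exact mul_ne_top hK ofReal_ne_top

theorem primitive_diffQuotient_cutoff (har : a ≤ r) (hg : MonotoneOn g (io a b))
    (hgm : Measurable g) (hK : K ≠ ∞) {δ x : ℝ} (hδ : 0 ≤ δ) (hx : (x : EReal) ≤ b) :
    primitive a (diffQuotient (cutoff b g r K) δ) x =
      (ENNReal.ofReal δ)⁻¹ * ∫⁻ τ in Ico (x - δ) x, cutoff b g r K τ := by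
  rw [primitive, setLIntegral_io_eq_Iio fun τ hτ => ?_]
  · exact setLIntegral_Iio_diffQuotient (measurable_cutoff hgm) hδ (monotoneOn_cutoff har hg hx)
      (setLIntegral_Iio_cutoff_ne_top hK _)
  · rw [diffQuotient, cutoff_of_le (EReal.coe_le_coe_iff.1 (hτ.trans har)), zero_tsub, mul_zero]

end Cutoff

theorem exists_seq_primitive_le_liminf {a b : EReal} {g : ℝ → ℝ≥0∞} (ha : a ≠ ⊤)
    (hgm : Measurable g) (hg : MonotoneOn g (io a b)) :
    ∃ h : ℕ → ℝ → ℝ≥0∞, (∀ n, Measurable (h n)) ∧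
      (∀ n, ∀ x ∈ io a b, primitive a (h n) x ≤ g x) ∧
      ∀ᵐ x ∂volume.restrict (io a b), g x ≤ liminf (fun n => primitive a (h n) x) atTop := by
  obtain ⟨r, har, hr⟩ := EReal.exists_seq_ge_eventually_lt ha
  set δ : ℕ → ℝ := fun n => 1 / (n + 1)
  have hδ : ∀ n, 0 < δ n := fun n => by positivity
  set φ : ℕ → ℝ → ℝ≥0∞ := fun n => cutoff b g (r n) n
  have hprim : ∀ n, ∀ x ∈ io a b, primitive a (diffQuotient (φ n) (δ n)) x =
      (ENNReal.ofReal (δ n))⁻¹ * ∫⁻ τ in Ico (x - δ n) x, φ n τ := fun n x hx =>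
    primitive_diffQuotient_cutoff (har n) hg hgm (natCast_ne_top n) (hδ n).le hx.2.le
  refine ⟨fun n => diffQuotient (φ n) (δ n), fun n => measurable_diffQuotient
    (measurable_cutoff hgm) _, fun n x hx => ?_, ?_⟩
  · rw [hprim n x hx, ← inv_mul_setLIntegral_Ico_const (hδ n) x (g x)]
    exact mul_le_mul_right (setLIntegral_mono' measurableSet_Ico fun τ hτ =>
      cutoff_le_of_le (har n) hg hx hτ.2.le) _
  refine (ae_restrict_iff' (measurableSet_io a b)).2
    (ae_le_of_forall_lt_le volume fun x hx y hy hyx => ?_)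
  have hyδ : ∀ᶠ n in atTop, y < x - δ n :=
    (tendsto_one_div_add_atTop_nhds_zero_nat.const_sub x).eventually_const_lt (by simpa using hyx)
  have hlow : ∀ᶠ n : ℕ in atTop,
      min (g y) (n : ℝ≥0∞) ≤ primitive a (diffQuotient (φ n) (δ n)) x := by
    filter_upwards [hr y hy.1, hyδ] with n hry hyδ
    rw [hprim n x hx, ← inv_mul_setLIntegral_Ico_const (hδ n) x (min (g y) n)]
    exact mul_le_mul_right (setLIntegral_mono' measurableSet_Ico fun τ hτ =>
      min_le_cutoff (har n) hg ⟨EReal.coe_lt_coe_iff.2 hry, hy.2⟩ (hyδ.le.trans hτ.1)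
        ((EReal.coe_lt_coe_iff.2 hτ.2).trans hx.2)) _
  have hmin : Tendsto (fun n : ℕ => min (g y) n) atTop (𝓝 (g y)) := by
    simpa using tendsto_const_nhds.min ENNReal.tendsto_nat_nhds_top
  calc g y = liminf (fun n : ℕ => min (g y) n) atTop := hmin.liminf_eq.symm
    _ ≤ _ := liminf_le_liminf hlow

section Reduction

variable {a b : EReal} {p q : ℝ} {u v w : ℝ → ℝ≥0∞} {C : ℝ≥0∞}

theorem hardyFunctional_primitive_le_of_monotone (hp : 0 < p) (hq : 0 < q) (hv : Measurable v)
    (hmon : ∀ f : ℝ → ℝ≥0∞, Measurable f → MonotoneOn f (io a b) →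
      lhsMon a b q u w f ≤ C * rhsNorm a b p v f)
    {h : ℝ → ℝ≥0∞} (hh : Measurable h) :
    hardyFunctional a b q u w (fun t => primitive a h t ^ (1 / p)) ^ (p / q) ≤
      C ^ p * ∫⁻ x in io a b, h x * ∫⁻ t in io x b, v t := by
  have hmono := hmon (fun t => primitive a h t ^ (1 / p))
    ((measurable_primitive a h).pow_const _)
    (((ENNReal.monotone_rpow_of_nonneg (by positivity)).comp (monotone_primitive a h)).monotoneOn _)
  rw [lhsMon_le_iff hq, ← ENNReal.rpow_div_le_rpow_iff hp hq,
    ENNReal.mul_rpow_of_nonneg _ _ hp.le, rhsNorm_rpow a b hp] at hmono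
  have hpow : ∀ t, (primitive a h t ^ (1 / p)) ^ p = primitive a h t := fun t => by
    rw [one_div, ENNReal.rpow_inv_rpow hp.ne']
  simp only [hpow] at hmono
  rwa [← lintegral_primitive_mul a b hh hv]

theorem lhsMon_le_of_hardyFunctional_primitive_le (hp : 0 < p) (hq : 0 < q) (ha : a ≠ ⊤)
    (hu : Measurable u) (hv : Measurable v) (hw : Measurable w)
    (hprim : ∀ h : ℝ → ℝ≥0∞, Measurable h →
      hardyFunctional a b q u w (fun t => primitive a h t ^ (1 / p)) ^ (p / q) ≤
        C ^ p * ∫⁻ x in io a b, h x * ∫⁻ t in io x b, v t)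
    {f : ℝ → ℝ≥0∞} (hf : Measurable f) (hfmono : MonotoneOn f (io a b)) :
    lhsMon a b q u w f ≤ C * rhsNorm a b p v f := by
  obtain ⟨h, hhm, hle, hlim⟩ := exists_seq_primitive_le_liminf ha (hf.pow_const p)
    ((ENNReal.monotone_rpow_of_nonneg hp.le).comp_monotoneOn hfmono)
  have hbound : ∀ n, hardyFunctional a b q u w (fun t => primitive a (h n) t ^ (1 / p)) ≤
      (C * rhsNorm a b p v f) ^ q := fun n => by
    rw [← ENNReal.rpow_div_le_rpow_iff hp hq, ENNReal.mul_rpow_of_nonneg _ _ hp.le,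
      rhsNorm_rpow a b hp]
    refine (hprim _ (hhm n)).trans (mul_le_mul_right ?_ _)
    rw [← lintegral_primitive_mul a b (hhm n) hv]
    exact setLIntegral_mono' (measurableSet_io a b) fun x hx => mul_le_mul_left (hle n x hx) _
  have hfF : ∀ᵐ t ∂volume.restrict (io a b),
      f t ≤ liminf (fun n => primitive a (h n) t ^ (1 / p)) atTop := by
    filter_upwards [hlim] with t ht
    calc f t = (f t ^ p) ^ (1 / p) := by rw [one_div, ENNReal.rpow_rpow_inv hp.ne']
      _ ≤ liminf (fun n => primitive a (h n) t) atTop ^ (1 / p) := by gcongr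
      _ = _ := ENNReal.liminf_rpow _ (by positivity)
  rw [lhsMon_le_iff hq]
  calc hardyFunctional a b q u w f
      ≤ liminf (fun n => hardyFunctional a b q u w (fun t => primitive a (h n) t ^ (1 / p)))
          atTop :=
        hardyFunctional_le_liminf hq hu hw (fun n => (measurable_primitive a _).pow_const _) hfF
    _ ≤ _ := liminf_le_of_frequently_le (.of_forall hbound)

end Reduction

theorem monotone_reduction_general (a b : EReal) (hab : a < b) (p q : ℝ) (hp : 0 < p)
    (hq : 0 < q) (u v w : ℝ → ℝ≥0∞)
    (hu : IsWeight a b u) (hv : IsWeight a b v) (hw : IsWeight a b w)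
    (C : ℝ≥0∞) :
    (∀ f : ℝ → ℝ≥0∞, Measurable f → MonotoneOn f (io a b) →
        lhsMon a b q u w f ≤ C * rhsNorm a b p v f) ↔
      (∀ h : ℝ → ℝ≥0∞, Measurable h →
        (∫⁻ x in io a b,
            (∫⁻ t in io a x, (∫⁻ τ in io a t, h τ) ^ (1 / p) * u t) ^ q * w x) ^ (p / q) ≤
          C ^ p * ∫⁻ x in io a b, h x * ∫⁻ t in io x b, v t) :=
  ⟨fun hmon _ hh => hardyFunctional_primitive_le_of_monotone hp hq hv.1 hmon hh,
    fun hprim _ hf hfmono =>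
      lhsMon_le_of_hardyFunctional_primitive_le hp hq hab.ne_top hu.1 hv.1 hw.1 hprim hf hfmono⟩

theorem monotone_reduction (a b : EReal) (hab : a < b) (p q : ℝ) (hp : 0 < p)
    (hq : 0 < q) (u v w : ℝ → ℝ≥0∞)
    (hu : IsWeight a b u) (hv : IsWeight a b v) (hw : IsWeight a b w)
    (C : ℝ≥0∞) (hC : 0 < C) (hC' : C < ⊤) :
    (∀ f : ℝ → ℝ≥0∞, Measurable f → MonotoneOn f (io a b) →
        lhsMon a b q u w f ≤ C * rhsNorm a b p v f) ↔
      (∀ h : ℝ → ℝ≥0∞, Measurable h →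
        (∫⁻ x in io a b,
            (∫⁻ t in io a x, (∫⁻ τ in io a t, h τ) ^ (1 / p) * u t) ^ q * w x) ^ (p / q) ≤
          C ^ p * ∫⁻ x in io a b, h x * ∫⁻ t in io x b, v t) :=
  monotone_reduction_general a b hab p q hp hq u v w hu hv hw C
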